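/- Let T ∈ L(E) be a contraction (‖T‖ ≤ 1) and W a nonzero orthogonally complemented T-invariant submodule such that the restriction T|_W : W → W is unitary. Then W reduces T, i.e., W^⊥ is also T-invariant. -/

import Mathlib

open scoped RightActions

/-- The December 2024 Mathlib notion of a Hilbert C⋆-module (right `A`-action via `Aᵐᵒᵖ`),
restated verbatim under a new name since Mathlib's `CStarModule` has changed meaning. -/
class RightCStarModule (A E : Type*) [NonUnitalSemiring A] [StarRing A] [Module ℂ A]
    [AddCommGroup E] [Module ℂ E] [PartialOrder A] [SMul Aᵐᵒᵖ E] [Norm A] [Norm E]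
    extends Inner A E where
  inner_add_right {x} {y} {z} : inner x (y + z) = inner x y + inner x z
  inner_self_nonneg {x} : 0 ≤ inner x x
  inner_self {x} : inner x x = 0 ↔ x = 0
  inner_op_smul_right {a : A} {x y : E} : inner x (y <• a) = inner x y * a
  inner_smul_right_complex {z : ℂ} {x} {y} : inner x (z • y) = z • inner x y
  star_inner x y : star (inner x y) = inner y x
  norm_eq_sqrt_norm_inner_self x : ‖x‖ = Real.sqrt ‖inner x x‖

section

variable {A : Type*} [CStarAlgebra A] [PartialOrder A] [StarOrderedRing A]
variable {E : Type*} [NormedAddCommGroup E] [NormedSpace ℂ E] [SMul Aᵐᵒᵖ E]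
  [RightCStarModule A E] [CompleteSpace E]

local notation "⟪" x ", " y "⟫" => inner (𝕜 := A) x y

/-- `T` is a bounded adjointable `A`-linear operator with adjoint `T'`. -/
def IsAdjointableWith (T T' : E →L[ℂ] E) : Prop :=
  (∀ (a : A) (x : E), T (x <• a) = T x <• a) ∧
  ∀ x y : E, ⟪T x, y⟫ = ⟪x, T' y⟫

/-- The orthogonal complement of a subset of a Hilbert C*-module. -/
def ortho (W : Set E) : Set E := {y | ∀ x ∈ W, ⟪x, y⟫ = (0 : A)}

/-- `W` is orthogonally complemented in `E`. -/
def OrthoComplemented (W : Set E) : Prop :=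
  ∀ z : E, ∃ x ∈ W, ∃ y ∈ ortho (A := A) W, z = x + y

/-- `W` is a closed `A`-submodule of `E`. -/
def IsClosedSubmodule (W : Submodule ℂ E) : Prop :=
  IsClosed (W : Set E) ∧ ∀ (a : A), ∀ x ∈ W, x <• a ∈ W

/-- An orthogonal projection in `L(E)`: an `A`-linear, idempotent, self-adjoint operator. -/
def IsOrthoProjection (P : E →L[ℂ] E) : Prop :=
  (∀ (a : A) (x : E), P (x <• a) = P x <• a) ∧ P.comp P = P ∧
  ∀ x y : E, ⟪P x, y⟫ = ⟪x, P y⟫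

/-- A "compact" operator on a Hilbert C*-module: a member of the closure of the span
of the rank-one operators `z ↦ x ⟨y, z⟩`. -/
def IsCompactOp (K : E →L[ℂ] E) : Prop :=
  K ∈ closure (Submodule.span ℂ
    {S : E →L[ℂ] E | ∃ x y : E, ∀ z : E, S z = x <• ⟪y, z⟫} : Set (E →L[ℂ] E))

/-- `E` is a finitely generated Hilbert `A`-module. -/
def IsFinGen : Prop :=
  ∃ (n : ℕ) (g : Fin n → E), ∀ x : E,
    x ∈ Submodule.span ℂ {y : E | ∃ (i : Fin n) (a : A), y = g i <• a}

/-- `T` is invertible in `L(E)`, the bounded adjointable operators. -/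
def InvertibleInL (T : E →L[ℂ] E) : Prop :=
  ∃ S S' : E →L[ℂ] E, IsAdjointableWith (A := A) S S' ∧ S.comp T = 1 ∧ T.comp S = 1

end

/-!
Write `x ∈ W` as `x = T u` with `u ∈ W`. The adjoint `T'` is again a contraction, so
`⟪T' x, T' x⟫ ≤ ⟪x, x⟫`; expanding `⟪T' x - u, T' x - u⟫` with `⟪T u, T u⟫ = ⟪u, u⟫` shows that it
is `≤ 0`, hence `T' x = u ∈ W` and `⟪x, T y⟫ = ⟪T' x, y⟫ = 0` for `y ⊥ W`.

The `A`-valued inequality `⟪S x, S x⟫ ≤ ⟪x, x⟫` for a contraction `S` needs a square root of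
`1 - t S'S` for `t < 1`: it is `1 - Y` for the fixed point `Y` of the contraction
`Y ↦ (t S'S + Y²) / 2` on small symmetric operators. Letting `t → 1` gives the inequality.
-/

open Filter Metric Set Topology

theorem exists_mem_mul_self_eq_one_sub {R : Type*} [NormedRing R] [NormedAlgebra ℝ R]
    [CompleteSpace R] {B : R} (hB : ‖B‖ < 1) {S : Set R} (hS : IsClosed S) (h0 : (0 : R) ∈ S)
    (hmaps : ∀ Y ∈ S, (2⁻¹ : ℝ) • (B + Y * Y) ∈ S) :
    ∃ Y ∈ S, (1 - Y) * (1 - Y) = 1 - B := by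
  obtain ⟨ρ, hρ0, hρ1, hρB⟩ : ∃ ρ : ℝ, 0 ≤ ρ ∧ ρ < 1 ∧ ‖B‖ + ρ * ρ ≤ 2 * ρ :=
    ⟨(1 + ‖B‖) / 2, by positivity, by linarith, by nlinarith [norm_nonneg B]⟩
  set F : R → R := fun Y => (2⁻¹ : ℝ) • (B + Y * Y)
  set s := S ∩ closedBall 0 ρ
  have hFs : MapsTo F s s := fun Y ⟨hYS, hY⟩ => by
    refine ⟨hmaps Y hYS, mem_closedBall_zero_iff.2 ?_⟩
    rw [mem_closedBall_zero_iff] at hY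
    calc ‖F Y‖ ≤ 2⁻¹ * (‖B‖ + ‖Y‖ * ‖Y‖) := by
          rw [norm_smul, Real.norm_of_nonneg (by norm_num)]
          gcongr
          exact (norm_add_le _ _).trans (add_le_add_right (norm_mul_le _ _) _)
      _ ≤ 2⁻¹ * (‖B‖ + ρ * ρ) := by gcongr
      _ ≤ ρ := by linarith
  -- `Y² - Z² = Y (Y - Z) + (Y - Z) Z` makes `F` `ρ`-Lipschitz on the ball of radius `ρ`
  have hlip : LipschitzOnWith ⟨ρ, hρ0⟩ F s := by
    refine LipschitzOnWith.of_dist_le_mul fun Y ⟨_, hY⟩ Z ⟨_, hZ⟩ => ?_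
    rw [mem_closedBall_zero_iff] at hY hZ
    have hdiff : F Y - F Z = (2⁻¹ : ℝ) • (Y * (Y - Z) + (Y - Z) * Z) := by
      simp only [F, ← smul_sub]
      congr 1
      noncomm_ring
    rw [dist_eq_norm, dist_eq_norm, hdiff, norm_smul, Real.norm_of_nonneg (by norm_num)]
    calc 2⁻¹ * ‖Y * (Y - Z) + (Y - Z) * Z‖ ≤ 2⁻¹ * (‖Y‖ * ‖Y - Z‖ + ‖Y - Z‖ * ‖Z‖) := by
          gcongr
          exact (norm_add_le _ _).trans (add_le_add (norm_mul_le _ _) (norm_mul_le _ _))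
      _ ≤ 2⁻¹ * (ρ * ‖Y - Z‖ + ‖Y - Z‖ * ρ) := by gcongr
      _ = ρ * ‖Y - Z‖ := by ring
  obtain ⟨Y, ⟨hYS, -⟩, hY, -⟩ := ContractingWith.exists_fixedPoint'
    (hS.inter isClosed_closedBall).isComplete hFs
    ⟨by exact_mod_cast hρ1, hlip.mapsToRestrict hFs⟩ (x := 0) ⟨h0, by simp [hρ0]⟩
    (edist_ne_top _ _)
  refine ⟨Y, hYS, ?_⟩
  have h2Y : Y + Y = B + Y * Y := by
    conv_lhs => rw [← hY.eq]
    rw [← two_smul ℝ, smul_smul]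
    norm_num
  calc (1 - Y) * (1 - Y) = 1 - (Y + Y) + Y * Y := by noncomm_ring
    _ = 1 - B := by rw [h2Y]; abel

section Algebraic

variable {A : Type*} [NonUnitalRing A] [StarRing A] [Module ℂ A] [PartialOrder A] [Norm A]
variable {E : Type*} [AddCommGroup E] [Module ℂ E] [SMul Aᵐᵒᵖ E] [Norm E] [RightCStarModule A E]

local notation "⟪" x ", " y "⟫" => inner (𝕜 := A) x y

namespace RightCStarModule

lemma inner_add_left {x y z : E} : ⟪x + y, z⟫ = ⟪x, z⟫ + ⟪y, z⟫ := by
  rw [← star_inner z, inner_add_right, star_add, star_inner, star_inner]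

lemma inner_smul_right_real {r : ℝ} {x y : E} : ⟪x, r • y⟫ = r • ⟪x, y⟫ := by
  rw [← Complex.coe_smul, inner_smul_right_complex, Complex.coe_smul]

lemma inner_smul_left_real [StarModule ℂ A] {r : ℝ} {x y : E} : ⟪r • x, y⟫ = r • ⟪x, y⟫ := by
  rw [← star_inner y, inner_smul_right_real, ← Complex.coe_smul, star_smul, Complex.star_def,
    Complex.conj_ofReal, Complex.coe_smul, star_inner]

@[simp]
lemma inner_zero_right {x : E} : ⟪x, 0⟫ = 0 := by
  simpa using (inner_add_right (A := A) (x := x) (y := (0 : E)) (z := 0)).symm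

@[simp]
lemma inner_zero_left {x : E} : ⟪0, x⟫ = 0 := by
  rw [← star_inner x, inner_zero_right, star_zero]

lemma inner_sub_right {x y z : E} : ⟪x, y - z⟫ = ⟪x, y⟫ - ⟪x, z⟫ := by
  rw [eq_sub_iff_add_eq, ← inner_add_right, sub_add_cancel]

lemma inner_sub_left {x y z : E} : ⟪x - y, z⟫ = ⟪x, z⟫ - ⟪y, z⟫ := by
  rw [← star_inner z, inner_sub_right, star_sub, star_inner, star_inner]

lemma inner_op_smul_left {a : A} {x y : E} : ⟪x <• a, y⟫ = star a * ⟪x, y⟫ := by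
  rw [← star_inner y, inner_op_smul_right, star_mul, star_inner]

lemma inner_adjoint_symm {T T' : E → E} (h : ∀ x y, ⟪T x, y⟫ = ⟪x, T' y⟫) (x y : E) :
    ⟪T' x, y⟫ = ⟪x, T y⟫ := by
  rw [← star_inner (T y), h, star_inner]

end RightCStarModule

end Algebraic

section Normed

variable {A : Type*} [CStarAlgebra A] [PartialOrder A]
variable {E : Type*} [NormedAddCommGroup E] [NormedSpace ℂ E] [SMul Aᵐᵒᵖ E] [RightCStarModule A E]

local notation "⟪" x ", " y "⟫" => inner (𝕜 := A) x y

namespace RightCStarModule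

lemma norm_sq_eq_norm_inner_self (x : E) : ‖x‖ ^ 2 = ‖⟪x, x⟫‖ := by
  rw [norm_eq_sqrt_norm_inner_self (A := A) x, Real.sq_sqrt (norm_nonneg _)]

lemma inner_swap_mul_inner_le [StarOrderedRing A] (x y : E) :
    ⟪y, x⟫ * ⟪x, y⟫ ≤ ‖x‖ ^ 2 • ⟪y, y⟫ := by
  rcases eq_or_ne x 0 with rfl | hx
  · simp
  -- expand `0 ≤ ⟪x a - ‖x‖² y, x a - ‖x‖² y⟫` at `a = ⟪x, y⟫`,
  -- using `star a ⟪x, x⟫ a ≤ ‖x‖² star a a`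
  have key (a : A) : (0 : A) ≤ ‖x‖ ^ 2 • (star a * a) - ‖x‖ ^ 2 • (star a * ⟪x, y⟫)
      - ‖x‖ ^ 2 • (⟪y, x⟫ * a) + ‖x‖ ^ 2 • (‖x‖ ^ 2 • ⟪y, y⟫) :=
    calc (0 : A) ≤ ⟪x <• a - ‖x‖ ^ 2 • y, x <• a - ‖x‖ ^ 2 • y⟫ := inner_self_nonneg
      _ = star a * ⟪x, x⟫ * a - ‖x‖ ^ 2 • (star a * ⟪x, y⟫)
          - ‖x‖ ^ 2 • (⟪y, x⟫ * a) + ‖x‖ ^ 2 • (‖x‖ ^ 2 • ⟪y, y⟫) := by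
        simp only [inner_sub_right, inner_op_smul_right, inner_sub_left, inner_op_smul_left,
          inner_smul_left_real, inner_smul_right_real, sub_mul, smul_mul_assoc, smul_sub,
          mul_assoc]
        abel
      _ ≤ ‖x‖ ^ 2 • (star a * a) - ‖x‖ ^ 2 • (star a * ⟪x, y⟫)
          - ‖x‖ ^ 2 • (⟪y, x⟫ * a) + ‖x‖ ^ 2 • (‖x‖ ^ 2 • ⟪y, y⟫) := by
        gcongr
        rw [norm_sq_eq_norm_inner_self (A := A)]
        exact CStarAlgebra.star_left_conjugate_le_norm_smul (star_inner x x)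
  have h := key ⟪x, y⟫
  rw [star_inner, sub_self, zero_sub, neg_add_eq_sub, sub_nonneg,
    smul_le_smul_iff_of_pos_left (pow_pos (norm_pos_iff.2 hx) 2)] at h
  exact h

lemma norm_inner_le [StarOrderedRing A] (x y : E) : ‖⟪x, y⟫‖ ≤ ‖x‖ * ‖y‖ := by
  have h : ‖⟪x, y⟫‖ ^ 2 ≤ (‖x‖ * ‖y‖) ^ 2 :=
    calc ‖⟪x, y⟫‖ ^ 2 = ‖⟪y, x⟫ * ⟪x, y⟫‖ := by
          rw [← star_inner x y, CStarRing.norm_star_mul_self, pow_two]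
      _ ≤ ‖‖x‖ ^ 2 • ⟪y, y⟫‖ := by
          refine CStarAlgebra.norm_le_norm_of_nonneg_of_le ?_ (inner_swap_mul_inner_le x y)
          rw [← star_inner x y]
          exact star_mul_self_nonneg _
      _ = (‖x‖ * ‖y‖) ^ 2 := by
          rw [norm_smul, norm_pow, norm_norm, ← norm_sq_eq_norm_inner_self (A := A) y]
          ring
  exact (pow_le_pow_iff_left₀ (norm_nonneg _) (by positivity) two_ne_zero).1 h

lemma continuous_inner [StarOrderedRing A] : Continuous fun p : E × E => ⟪p.1, p.2⟫ :=
  IsBoundedBilinearMap.continuous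
    { add_left := fun _ _ _ => inner_add_left
      smul_left := fun _ _ _ => inner_smul_left_real
      add_right := fun _ _ _ => inner_add_right
      smul_right := fun _ _ _ => inner_smul_right_real
      bound := ⟨1, one_pos, fun x y => by rw [one_mul]; exact norm_inner_le x y⟩ }

lemma opNorm_adjoint_le [StarOrderedRing A] {T T' : E →L[ℂ] E}
    (h : ∀ x y, ⟪T x, y⟫ = ⟪x, T' y⟫) : ‖T'‖ ≤ ‖T‖ := by
  refine T'.opNorm_le_bound (norm_nonneg T) fun y => ?_
  have h : ‖T' y‖ * ‖T' y‖ ≤ ‖T' y‖ * (‖T‖ * ‖y‖) :=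
    calc ‖T' y‖ * ‖T' y‖ = ‖⟪T (T' y), y⟫‖ := by
          rw [← pow_two, norm_sq_eq_norm_inner_self (A := A), h]
      _ ≤ ‖T (T' y)‖ * ‖y‖ := norm_inner_le _ _
      _ ≤ ‖T' y‖ * (‖T‖ * ‖y‖) := by nlinarith [T.le_opNorm (T' y), norm_nonneg y]
  rcases (norm_nonneg (T' y)).eq_or_lt with h0 | h0
  · rw [← h0]; positivity
  · exact le_of_mul_le_mul_left h h0

def IsSymmetricOp (B : E →L[ℂ] E) : Prop := ∀ x y : E, ⟪B x, y⟫ = ⟪x, B y⟫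

namespace IsSymmetricOp

variable {B Y : E →L[ℂ] E}

lemma zero : IsSymmetricOp (A := A) (0 : E →L[ℂ] E) := fun _ _ => by simp

lemma smul_real (hB : IsSymmetricOp (A := A) B) (t : ℝ) : IsSymmetricOp (A := A) (t • B) :=
  fun x y => by simp only [smul_apply, inner_smul_left_real, inner_smul_right_real, hB x y]

lemma add (hB : IsSymmetricOp (A := A) B) (hY : IsSymmetricOp (A := A) Y) :
    IsSymmetricOp (A := A) (B + Y) := fun x y => by
  simp only [add_apply, inner_add_left, inner_add_right, hB x y, hY x y]

lemma mul_self (hY : IsSymmetricOp (A := A) Y) : IsSymmetricOp (A := A) (Y * Y) := fun x y => by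
  rw [mul_apply_eq_comp, mul_apply_eq_comp, hY, hY]

lemma one_sub (hY : IsSymmetricOp (A := A) Y) : IsSymmetricOp (A := A) (1 - Y) := fun x y => by
  simp only [sub_apply, one_apply_eq_self, inner_sub_left, inner_sub_right, hY x y]

lemma inner_mul_self_nonneg (hY : IsSymmetricOp (A := A) Y) (x : E) : 0 ≤ ⟪x, (Y * Y) x⟫ := by
  rw [mul_apply_eq_comp, ← hY]
  exact inner_self_nonneg

end IsSymmetricOp

lemma isSymmetricOp_adjoint_mul {T T' : E →L[ℂ] E} (h : ∀ x y, ⟪T x, y⟫ = ⟪x, T' y⟫) :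
    IsSymmetricOp (A := A) (T' * T) := fun x y => by
  rw [mul_apply_eq_comp, mul_apply_eq_comp, inner_adjoint_symm h, h]

lemma isClosed_setOf_isSymmetricOp [StarOrderedRing A] :
    IsClosed {B : E →L[ℂ] E | IsSymmetricOp (A := A) B} := by
  simp only [IsSymmetricOp, Set.ofPred_forall]
  refine isClosed_iInter fun x => isClosed_iInter fun y => isClosed_eq ?_ ?_
  · exact continuous_inner.comp
      ((ContinuousLinearMap.apply ℂ E x).continuous.prodMk continuous_const)
  · exact continuous_inner.comp
      (continuous_const.prodMk (ContinuousLinearMap.apply ℂ E y).continuous)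

end RightCStarModule

end Normed

section

variable {A : Type*} [CStarAlgebra A] [PartialOrder A] [StarOrderedRing A]
variable {E : Type*} [NormedAddCommGroup E] [NormedSpace ℂ E] [SMul Aᵐᵒᵖ E]
  [RightCStarModule A E] [CompleteSpace E]

local notation "⟪" x ", " y "⟫" => inner (𝕜 := A) x y

namespace RightCStarModule

namespace IsSymmetricOp

variable {B : E →L[ℂ] E}

lemma inner_sub_apply_nonneg_of_norm_lt_one (hB : IsSymmetricOp (A := A) B) (hB1 : ‖B‖ < 1)
    (x : E) : 0 ≤ ⟪x, x - B x⟫ := by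
  obtain ⟨Y, hY, hYB⟩ := exists_mem_mul_self_eq_one_sub hB1 isClosed_setOf_isSymmetricOp
    zero fun Y hY => (hB.add (mul_self hY)).smul_real 2⁻¹
  have h := (one_sub (A := A) hY).inner_mul_self_nonneg x
  rwa [hYB, sub_apply, one_apply_eq_self] at h

lemma inner_sub_apply_nonneg (hB : IsSymmetricOp (A := A) B) (hB1 : ‖B‖ ≤ 1) (x : E) :
    0 ≤ ⟪x, x - B x⟫ := by
  have hlim : Tendsto (fun t : ℝ => ⟪x, x - (t • B) x⟫) (𝓝[<] 1) (𝓝 ⟪x, x - B x⟫) := by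
    have hcont : Continuous fun t : ℝ => ⟪x, x - (t • B) x⟫ := by
      simp only [smul_apply, inner_sub_right, inner_smul_right_real]
      fun_prop
    simpa using hcont.continuousWithinAt.tendsto (x := 1)
  refine ge_of_tendsto hlim ?_
  filter_upwards [Ioo_mem_nhdsLT (zero_lt_one' ℝ)] with t ⟨ht0, ht1⟩
  refine (hB.smul_real t).inner_sub_apply_nonneg_of_norm_lt_one ?_ x
  calc ‖t • B‖ ≤ ‖t‖ * ‖B‖ := norm_smul_le t B
    _ < 1 := by rw [Real.norm_of_nonneg ht0.le]; nlinarith [norm_nonneg B]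

end IsSymmetricOp

lemma inner_apply_self_le {T T' : E →L[ℂ] E} (h : ∀ x y, ⟪T x, y⟫ = ⟪x, T' y⟫) (hT : ‖T‖ ≤ 1)
    (x : E) : ⟪T x, T x⟫ ≤ ⟪x, x⟫ := by
  have hB : ‖T' * T‖ ≤ 1 :=
    calc ‖T' * T‖ ≤ ‖T'‖ * ‖T‖ := norm_mul_le _ _
      _ ≤ 1 := mul_le_one₀ ((opNorm_adjoint_le h).trans hT) (norm_nonneg _) hT
  have := (isSymmetricOp_adjoint_mul h).inner_sub_apply_nonneg hB x
  rwa [inner_sub_right, mul_apply_eq_comp, ← h, sub_nonneg] at this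

lemma adjoint_apply_apply_eq_of_inner_apply_self {T T' : E →L[ℂ] E}
    (h : ∀ x y, ⟪T x, y⟫ = ⟪x, T' y⟫) (hT : ‖T‖ ≤ 1) {u : E} (hu : ⟪T u, T u⟫ = ⟪u, u⟫) :
    T' (T u) = u := by
  set x := T u
  have hle : ⟪T' x, T' x⟫ ≤ ⟪x, x⟫ :=
    inner_apply_self_le (inner_adjoint_symm h) ((opNorm_adjoint_le h).trans hT) x
  have hexp : ⟪T' x - u, T' x - u⟫ = ⟪T' x, T' x⟫ - ⟪x, x⟫ := by
    have hleft : ⟪T' x, u⟫ = ⟪x, x⟫ := inner_adjoint_symm h x u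
    have hright : ⟪u, T' x⟫ = ⟪x, x⟫ := (h u x).symm
    rw [inner_sub_left, inner_sub_right, inner_sub_right, hleft, hright, ← hu]
    abel
  rw [← sub_eq_zero, ← inner_self (A := A)]
  exact le_antisymm (hexp ▸ sub_nonpos.2 hle) inner_self_nonneg

end RightCStarModule

theorem stmt15_general (T T' : E →L[ℂ] E) (hT : IsAdjointableWith (A := A) T T')
    (hnorm : ‖T‖ ≤ 1) (W : Submodule ℂ E)
    (hiso : ∀ x ∈ W, ∀ y ∈ W, ⟪T x, T y⟫ = ⟪x, y⟫)
    (hsurj : ∀ y ∈ W, ∃ x ∈ W, T x = y) :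
    ∀ y ∈ ortho (A := A) (W : Set E), T y ∈ ortho (A := A) (W : Set E) := by
  intro y hy x hx
  obtain ⟨u, hu, rfl⟩ := hsurj x hx
  have hTu : T' (T u) = u :=
    RightCStarModule.adjoint_apply_apply_eq_of_inner_apply_self hT.2 hnorm (hiso u hu u hu)
  rw [← RightCStarModule.inner_adjoint_symm hT.2, hTu]
  exact hy u hu

/-- If `T` is a contraction, `W` is a nonzero orthogonally complemented `T`-invariant
submodule, and the restriction `T|_W` is unitary, then `W` reduces `T`. -/
theorem stmt15 (T T' : E →L[ℂ] E) (hT : IsAdjointableWith (A := A) T T')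
    (hnorm : ‖T‖ ≤ 1) (W : Submodule ℂ E) (hWcl : IsClosedSubmodule (A := A) W)
    (hWc : OrthoComplemented (A := A) (W : Set E)) (hW0 : W ≠ ⊥)
    (hinv : ∀ x ∈ W, T x ∈ W)
    (hiso : ∀ x ∈ W, ∀ y ∈ W, ⟪T x, T y⟫ = ⟪x, y⟫)
    (hsurj : ∀ y ∈ W, ∃ x ∈ W, T x = y) :
    ∀ y ∈ ortho (A := A) (W : Set E), T y ∈ ortho (A := A) (W : Set E) :=
  stmt15_general T T' hT hnorm W hiso hsurj

end
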